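/- In the exterior algebra setting of the Orlik-Solomon algebra: for a matroid M on [n] and χ(I^σ) = sgn(σ) for independent I (and 0 for dependent sets), the boundary map ∂e_X = Σ_p (-1)^p χ(X \ i_p) e_{X \ i_p} satisfies, for any unidependent set U and any unidependent subset U' ⊆ U, the identity ∂e_U = ε · (∂e_{U'}) e_{U\U'} for some sign ε ∈ {±1}. -/

import Mathlib

open scoped BigOperators
open scoped Matroid

/-- A circuit: a minimal dependent set. -/
def IsCircuit {n : ℕ} (M : Matroid (Fin n)) (C : Finset (Fin n)) : Prop :=
  M.Dep ↑C ∧ ∀ D : Finset (Fin n), D ⊂ C → ¬ M.Dep ↑D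

/-- A broken circuit: a circuit (of size > 1) with its minimum removed. -/
def IsBrokenCircuit {n : ℕ} (M : Matroid (Fin n)) (B : Finset (Fin n)) : Prop :=
  ∃ (C : Finset (Fin n)) (a : Fin n), IsCircuit M C ∧ 1 < C.card ∧ a ∈ C ∧
    (∀ b ∈ C, a ≤ b) ∧ B = C.erase a

/-- A no-broken-circuit set. -/
def NBCSet {n : ℕ} (M : Matroid (Fin n)) (I : Finset (Fin n)) : Prop :=
  M.Indep ↑I ∧ ∀ B ⊆ I, ¬ IsBrokenCircuit M B

/-- A unidependent set: contains exactly one circuit. -/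
def Unidep {n : ℕ} (M : Matroid (Fin n)) (U : Finset (Fin n)) : Prop :=
  ↑U ⊆ M.E ∧ ∃! C : Finset (Fin n), C ⊆ U ∧ IsCircuit M C

/-- x is a loop. -/
def IsLoopM {n : ℕ} (M : Matroid (Fin n)) (x : Fin n) : Prop := M.Dep {x}

/-- Deletion of a single element. -/
noncomputable def mdel {n : ℕ} (M : Matroid (Fin n)) (x : Fin n) : Matroid (Fin n) :=
  M ↾ (M.E \ {x})

/-- Contraction of a single element, via duality. -/
noncomputable def mcon {n : ℕ} (M : Matroid (Fin n)) (x : Fin n) : Matroid (Fin n) :=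
  (M✶ ↾ (M.E \ {x}))✶

open scoped Classical in
/-- The rank of a finite set: maximal cardinality of an independent subset. -/
noncomputable def rkFin {n : ℕ} (M : Matroid (Fin n)) (U : Finset (Fin n)) : ℕ :=
  (U.powerset.filter fun I : Finset (Fin n) => M.Indep (↑I : Set (Fin n))).sup Finset.card

/-- A simple matroid with ground set everything. -/
def SimpleGround {n : ℕ} (M : Matroid (Fin n)) : Prop :=
  M.E = Set.univ ∧ (∀ i : Fin n, M.Indep {i}) ∧
    ∀ i j : Fin n, i ≠ j → M.Indep {i, j}

/-- Number of inversions of a list. -/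
def listInv {n : ℕ} : List (Fin n) → ℕ
  | [] => 0
  | a :: t => (t.countP fun b => decide (b < a)) + listInv t

/-- χ evaluated on an ordered set, with the sign convention χ(X^σ) = sgn(σ) χ(X). -/
def ochi {n : ℕ} {K : Type*} [Field K] (χ : Finset (Fin n) → K) (l : List (Fin n)) : K :=
  (-1 : K) ^ listInv l * χ l.toFinset

/-- The flag of flats associated to an ordered set: closures of its suffixes. -/
def flagOf {n : ℕ} (M : Matroid (Fin n)) (l : List (Fin n)) : List (Set (Fin n)) :=
  l.tails.map fun t => M.closure ↑t.toFinset

/-- An element `b` is active in `I`: it lies in `cl(I) \ I` and is the minimum of the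
(unique) circuit contained in `I ∪ {b}`. -/
def ActiveIn {n : ℕ} (M : Matroid (Fin n)) (I : Finset (Fin n)) (b : Fin n) : Prop :=
  b ∈ M.closure ↑I ∧ b ∉ I ∧
    ∃ C : Finset (Fin n), C ⊆ insert b I ∧ IsCircuit M C ∧ ∀ c ∈ C, b ≤ c


/-- An inactive unidependent set: `min C(U)` is the minimal active element of
`U \\ min C(U)`. -/
def InactiveUnidep {n : ℕ} (M : Matroid (Fin n)) (U : Finset (Fin n)) : Prop :=
  Unidep M U ∧ ∃ (C : Finset (Fin n)) (a : Fin n), C ⊆ U ∧ IsCircuit M C ∧ a ∈ C ∧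
    (∀ b ∈ C, a ≤ b) ∧ ∀ b : Fin n, ActiveIn M (U.erase a) b → a ≤ b

section Alg

variable {n : ℕ} {K : Type*} [Field K]

/-- The defining relations of the graded algebra `E`: squares of generators vanish and
generators commute up to the nonzero scalars `β i j` (for `i < j`). -/
inductive ERel (n : ℕ) (K : Type*) [Field K] (β : Fin n → Fin n → K) :
    FreeAlgebra K (Fin n) → FreeAlgebra K (Fin n) → Prop
  | sq (i : Fin n) : ERel n K β (FreeAlgebra.ι K i * FreeAlgebra.ι K i) 0
  | comm {i j : Fin n} (h : i < j) :
      ERel n K β (FreeAlgebra.ι K j * FreeAlgebra.ι K i)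
        (β i j • (FreeAlgebra.ι K i * FreeAlgebra.ι K j))

/-- The algebra `E` generated by `e_1, …, e_n` with `e_i² = 0`, `e_j e_i = β i j • e_i e_j`. -/
abbrev EAlg (n : ℕ) (K : Type*) [Field K] (β : Fin n → Fin n → K) := RingQuot (ERel n K β)

/-- The generator `e_i` of `E`. -/
noncomputable def gen (β : Fin n → Fin n → K) (i : Fin n) : EAlg n K β :=
  RingQuot.mkAlgHom K (ERel n K β) (FreeAlgebra.ι K i)

/-- `e_X`: the product of the generators indexed by `X`, in increasing order. -/
noncomputable def eset (β : Fin n → Fin n → K) (X : Finset (Fin n)) : EAlg n K β :=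
  ((X.sort (· ≤ ·)).map (gen β)).prod

/-- The χ-boundary `∂e_X = Σ_p (-1)^p χ(X \ i_p) e_{X \ i_p}` (with `X = {i_1 < … < i_m}`,
`p` running from 1 to m). -/
noncomputable def bdry (β : Fin n → Fin n → K) (χ : Finset (Fin n) → K)
    (X : Finset (Fin n)) : EAlg n K β :=
  ((((X.sort (· ≤ ·)).zipIdx.map Prod.swap)).map fun pi =>
    ((-1 : K) ^ (pi.1 + 1) * χ (X.erase pi.2)) • eset β (X.erase pi.2)).sum

end Alg

section Chi

variable {n : ℕ} {K : Type*} [Field K]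

/-- Condition (UC1). -/
def UC1 (M : Matroid (Fin n)) (χ : Finset (Fin n) → K) : Prop :=
  ∀ I : Finset (Fin n), χ I ≠ 0 ↔ M.Indep ↑I

/-- Condition (UC2). -/
def UC2 (β : Fin n → Fin n → K) (M : Matroid (Fin n)) (χ : Finset (Fin n) → K) : Prop :=
  ∀ U U' : Finset (Fin n), Unidep M U → Unidep M U' → U' ⊆ U →
    ∃ ε : K, ε ≠ 0 ∧ bdry β χ U = ε • (bdry β χ U' * eset β (U \ U'))

/-- The (right) ideal `I_χ(M)` of `E`, as a `K`-subspace: it is spanned by the products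
of the boundaries of circuits of size `> 1` (and of the generators indexed by loops)
with arbitrary elements of `E`. -/
noncomputable def chiIdeal (β : Fin n → Fin n → K) (M : Matroid (Fin n))
    (χ : Finset (Fin n) → K) : Submodule K (EAlg n K β) :=
  Submodule.span K
    ({ y | ∃ C : Finset (Fin n), IsCircuit M C ∧ 1 < C.card ∧
        ∃ z : EAlg n K β, y = bdry β χ C * z } ∪
     { y | ∃ i : Fin n, IsCircuit M {i} ∧ ∃ z : EAlg n K β, y = gen β i * z })

/-- The χ-algebra `A_χ(M) = E / I_χ(M)` (as a `K`-vector space). -/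
abbrev AChi (β : Fin n → Fin n → K) (M : Matroid (Fin n)) (χ : Finset (Fin n) → K) :=
  EAlg n K β ⧸ chiIdeal β M χ

/-- The residue class `[e_X]` in `A_χ(M)`. -/
noncomputable def cls (β : Fin n → Fin n → K) (M : Matroid (Fin n))
    (χ : Finset (Fin n) → K) (X : Finset (Fin n)) : AChi β M χ :=
  Submodule.Quotient.mk (eset β X)

/-- The induced map `χ_{M/x}`, `I ↦ χ(I * x)`. -/
def chiC (χ : Finset (Fin n) → K) (x : Fin n) : Finset (Fin n) → K :=
  fun I => ochi χ (I.sort (· ≤ ·) ++ [x])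

/-- Iterated single-element contraction along a list (the head is contracted last). -/
noncomputable def contrList (M : Matroid (Fin n)) : List (Fin n) → Matroid (Fin n)
  | [] => M
  | x :: t => mcon (contrList M t) x

/-- Iterated induced `χ` along a list. -/
def chiL (χ : Finset (Fin n) → K) : List (Fin n) → (Finset (Fin n) → K)
  | [] => χ
  | x :: t => chiC (chiL χ t) x

/-- The iterated residue `p_{I^σ} = p_{i_{σ(1)}} ∘ ⋯ ∘ p_{i_{σ(ℓ)}}` associated to a family
`P` of single-element residue maps and an ordered set (a list). -/
noncomputable def pIter (β : Fin n → Fin n → K)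
    (P : ∀ (M : Matroid (Fin n)) (χ : Finset (Fin n) → K) (x : Fin n),
      AChi β M χ →ₗ[K] AChi β (mcon M x) (chiC χ x))
    (M : Matroid (Fin n)) (χ : Finset (Fin n) → K) :
    (l : List (Fin n)) → (AChi β M χ →ₗ[K] AChi β (contrList M l) (chiL χ l))
  | [] => LinearMap.id
  | x :: t => (P (contrList M t) (chiL χ t) x).comp (pIter β P M χ t)

/-- The defining property of the residue map `p_x` on (classes of) independent sets. -/
def ResFormula (β : Fin n → Fin n → K)
    (P : ∀ (M : Matroid (Fin n)) (χ : Finset (Fin n) → K) (x : Fin n),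
      AChi β M χ →ₗ[K] AChi β (mcon M x) (chiC χ x)) : Prop :=
  ∀ (M : Matroid (Fin n)) (χ : Finset (Fin n) → K) (x : Fin n), ¬ IsLoopM M x →
    ∀ I : Finset (Fin n), M.Indep ↑I →
      (x ∈ I → P M χ x (cls β M χ I) = cls β (mcon M x) (chiC χ x) (I.erase x)) ∧
      (∀ y ∈ I, IsCircuit M {x, y} → P M χ x (cls β M χ I) =
        (ochi χ ((I.erase y).sort (· ≤ ·) ++ [x]) /
          ochi χ ((I.erase y).sort (· ≤ ·) ++ [y])) •
            cls β (mcon M x) (chiC χ x) (I.erase y)) ∧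
      (x ∉ I → (∀ y ∈ I, ¬ IsCircuit M {x, y}) → P M χ x (cls β M χ I) = 0)

end Chi

/-!
Let `C` be the unique circuit of `U`. Since `U'` is unidependent, its circuit lies in `U` and is
therefore `C` as well. For `x ∈ U`, the set `U \ x` is independent exactly when `x ∈ C`, and the
same holds for `U'`, so only the terms with `x ∈ C ⊆ U'` survive in `∂e_U` and `∂e_{U'}`. For such
`x`, the product `e_{U' \ x} e_{U \ U'}` equals `e_{U \ x}` up to the sign of the shuffle of
`U' \ x` past `U \ U'`. Combined with the sign `(-1)^p` of the position `p` of `x` in `U`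
or in `U'`, this yields the sign `(-1)^#{(a, b) ∈ U' × (U \ U') | b < a}`, which does not
depend on `x`.
-/

theorem List.Pairwise.countP_lt_getElem {α : Type*} [LinearOrder α] {l : List α}
    (hl : l.Pairwise (· < ·)) (i : ℕ) (hi : i < l.length) :
    l.countP (· < l[i]) = i := by
  induction l generalizing i with
  | nil => simp at hi
  | cons a t ih =>
    obtain ⟨ha, ht⟩ := List.pairwise_cons.1 hl
    cases i with
    | zero =>
      simp only [List.getElem_cons_zero, List.countP_cons, lt_irrefl, decide_false]
      simpa [List.countP_eq_zero] using fun b hb => (ha b hb).le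
    | succ j =>
      have hj : j < t.length := by simpa using hi
      simp [ih ht j hj, ha _ (List.getElem_mem hj)]

namespace Finset

variable {α : Type*} [LinearOrder α]

theorem card_filter_lt_sort_getElem (X : Finset α) (i : ℕ) (hi : i < X.sort.length) :
    #{y ∈ X | y < X.sort[i]} = i := by
  conv_rhs => rw [← (sortedLT_sort X).pairwise.countP_lt_getElem i hi]
  rw [← Multiset.coe_countP, sort_eq, Multiset.countP_eq_card_filter]
  rfl

theorem sum_sort {M : Type*} [AddCommMonoid M] (X : Finset α) (f : α → M) :
    (X.sort.map f).sum = ∑ x ∈ X, f x := by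
  rw [Finset.sum, ← sort_eq X (· ≤ ·)]
  rfl

end Finset

open Finset in
def crossInversions {α : Type*} [LinearOrder α] (X Y : Finset α) : ℕ :=
  ∑ x ∈ X, #{y ∈ Y | y < x}

section Boundary

open Finset

variable {n : ℕ} {K : Type*} [Field K]

theorem bdry_eq_sum (β : Fin n → Fin n → K) (χ : Finset (Fin n) → K) (X : Finset (Fin n)) :
    bdry β χ X = ∑ x ∈ X,
      ((-1 : K) ^ (#{y ∈ X | y < x} + 1) * χ (X.erase x)) • eset β (X.erase x) := by
  rw [bdry, ← sum_sort]
  congr 1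
  refine List.ext_getElem (by simp) fun i _ hi => ?_
  simp only [List.getElem_map, List.getElem_zipIdx, Prod.swap, zero_add]
  rw [card_filter_lt_sort_getElem X i (by simpa using hi)]

theorem eset_insert_of_forall_lt (β : Fin n → Fin n → K) {X : Finset (Fin n)} {a : Fin n}
    (ha : ∀ x ∈ X, a < x) : eset β (insert a X) = gen β a * eset β X := by
  rw [eset, sort_insert _ (fun x hx => (ha x hx).le) (fun h => lt_irrefl a (ha a h))]
  simp only [eset, List.map_cons, List.prod_cons]

end Boundary

section ExteriorAlgebra

open Finset

variable {n : ℕ} {K : Type*} [Field K]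

local notation "β₋" => (fun _ _ => (-1 : K) : Fin n → Fin n → K)

theorem gen_mul_gen_of_lt {i j : Fin n} (h : i < j) :
    gen β₋ j * gen β₋ i = (-1 : K) • (gen β₋ i * gen β₋ j) := by
  simp only [gen, ← map_mul, RingQuot.mkAlgHom_rel K (ERel.comm h), map_smul]

theorem gen_mul_eset {X : Finset (Fin n)} {b : Fin n} (hb : b ∉ X) :
    gen β₋ b * eset β₋ X = (-1 : K) ^ #{x ∈ X | x < b} • eset β₋ (insert b X) := by
  induction X using Finset.induction_on_min with
  | empty => simp [eset]
  | insert a X ha ih =>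
    have haX : a ∉ X := fun h => lt_irrefl a (ha a h)
    have hbX : b ∉ X := fun h => hb (mem_insert_of_mem h)
    rcases lt_or_gt_of_ne (ne_of_mem_of_not_mem (mem_insert_self a X) hb) with hab | hba
    · have hcount : #{x ∈ insert a X | x < b} = #{x ∈ X | x < b} + 1 := by
        rw [filter_insert, if_pos hab, card_insert_of_notMem fun h => haX (mem_filter.1 h).1]
      have hmin : ∀ x ∈ insert b X, a < x := (forall_mem_insert _ _ _).2 ⟨hab, ha⟩
      rw [eset_insert_of_forall_lt _ ha, ← mul_assoc, gen_mul_gen_of_lt hab, smul_mul_assoc,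
        mul_assoc, ih hbX, mul_smul_comm, smul_smul, insert_comm,
        eset_insert_of_forall_lt _ hmin, hcount, pow_succ']
    · have hcount : #{x ∈ insert a X | x < b} = 0 := by
        simp only [card_eq_zero, filter_eq_empty_iff, forall_mem_insert, not_lt]
        exact ⟨hba.le, fun x hx => (hba.trans (ha x hx)).le⟩
      have hmin : ∀ x ∈ insert a X, b < x :=
        (forall_mem_insert _ _ _).2 ⟨hba, fun x hx => hba.trans (ha x hx)⟩
      rw [hcount, pow_zero, one_smul, eset_insert_of_forall_lt _ hmin,
        eset_insert_of_forall_lt _ ha]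

theorem eset_mul_eset {X Y : Finset (Fin n)} (hXY : Disjoint X Y) :
    eset β₋ X * eset β₋ Y = (-1 : K) ^ crossInversions X Y • eset β₋ (X ∪ Y) := by
  induction X using Finset.induction_on_min with
  | empty => simp [eset, crossInversions]
  | insert a X ha ih =>
    have haX : a ∉ X := fun h => lt_irrefl a (ha a h)
    obtain ⟨haY, hXY⟩ := disjoint_insert_left.1 hXY
    have hcount : #{z ∈ X ∪ Y | z < a} = #{y ∈ Y | y < a} := by
      rw [filter_union, filter_false_of_mem fun x hx => not_lt.2 (ha x hx).le, empty_union]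
    rw [crossInversions] at ih ⊢
    rw [eset_insert_of_forall_lt _ ha, mul_assoc, ih hXY, mul_smul_comm,
      gen_mul_eset (by simp [haX, haY]), smul_smul, hcount, ← pow_add, sum_insert haX, add_comm,
      insert_union]

theorem smul_eset_erase_mul_eset_sdiff {U U' : Finset (Fin n)} (hsub : U' ⊆ U) {x : Fin n}
    (hx : x ∈ U') :
    (-1 : K) ^ crossInversions U' (U \ U') •
        ((-1 : K) ^ (#{y ∈ U' | y < x} + 1) • (eset β₋ (U'.erase x) * eset β₋ (U \ U'))) =
      (-1 : K) ^ (#{y ∈ U | y < x} + 1) • eset β₋ (U.erase x) := by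
  have hdisj : Disjoint (U'.erase x) (U \ U') := disjoint_sdiff.mono_left (erase_subset x U')
  have hunion : U'.erase x ∪ U \ U' = U.erase x := by
    conv_rhs => rw [← union_sdiff_of_subset hsub]
    rw [erase_union_distrib, erase_eq_of_notMem fun h => (mem_sdiff.1 h).2 hx]
  have hcount : #{y ∈ U | y < x} = #{y ∈ U' | y < x} + #{b ∈ U \ U' | b < x} := by
    rw [← card_union_of_disjoint (disjoint_sdiff.mono (filter_subset _ _) (filter_subset _ _)),
      ← filter_union, union_sdiff_of_subset hsub]
  have hsplit : crossInversions U' (U \ U') =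
      crossInversions (U'.erase x) (U \ U') + #{b ∈ U \ U' | b < x} :=
    (sum_erase_add U' _ hx).symm
  have hexp : crossInversions U' (U \ U') + (#{y ∈ U' | y < x} + 1) +
      crossInversions (U'.erase x) (U \ U') =
      (#{y ∈ U | y < x} + 1) + 2 * crossInversions (U'.erase x) (U \ U') := by
    omega
  rw [eset_mul_eset hdisj, hunion, smul_smul, smul_smul, ← pow_add, ← pow_add, hexp, pow_add,
    pow_mul, neg_one_sq, one_pow, mul_one]

end ExteriorAlgebra

section Unidependent

variable {n : ℕ} {M : Matroid (Fin n)}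

theorem exists_isCircuit_subset_of_dep {X : Finset (Fin n)} (hX : M.Dep ↑X) :
    ∃ C ⊆ X, IsCircuit M C := by
  induction X using Finset.strongInduction with
  | H X ih =>
    by_cases hmin : ∀ D : Finset (Fin n), D ⊂ X → ¬ M.Dep ↑D
    · exact ⟨X, subset_rfl, hX, hmin⟩
    · push Not at hmin
      obtain ⟨D, hDX, hD⟩ := hmin
      obtain ⟨C, hCD, hC⟩ := ih D hDX hD
      exact ⟨C, hCD.trans hDX.subset, hC⟩

theorem Unidep.indep_erase_iff {U C : Finset (Fin n)} (hU : Unidep M U) (hCU : C ⊆ U)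
    (hC : IsCircuit M C) (x : Fin n) : M.Indep ↑(U.erase x) ↔ x ∈ C := by
  constructor
  · intro hind
    by_contra hxC
    exact hC.1.not_indep (hind.subset (Finset.coe_subset.2 (Finset.subset_erase.2 ⟨hCU, hxC⟩)))
  · intro hxC
    by_contra hdep
    have hdep : M.Dep ↑(U.erase x) :=
      ⟨hdep, (Finset.coe_subset.2 (Finset.erase_subset x U)).trans hU.1⟩
    obtain ⟨D, hDU, hD⟩ := exists_isCircuit_subset_of_dep hdep
    have hDC : D = C := hU.2.unique ⟨hDU.trans (Finset.erase_subset x U), hD⟩ ⟨hCU, hC⟩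
    exact Finset.notMem_erase x U (hDU (hDC ▸ hxC))

end Unidependent

open scoped Classical in
/-- in the Orlik–Solomon (exterior algebra) setting, for unidependents
`U' ⊆ U` one has `∂e_U = ε (∂e_{U'}) e_{U\U'}` with `ε = ±1`. -/
theorem os_UC2 {n : ℕ} {K : Type*} [Field K] (M : Matroid (Fin n))
    (U U' : Finset (Fin n)) (hU : Unidep M U) (hU' : Unidep M U') (hsub : U' ⊆ U) :
    ∃ ε : K, (ε = 1 ∨ ε = -1) ∧
      bdry (fun _ _ => (-1 : K))
          (fun X => if M.Indep (↑X : Set (Fin n)) then (1 : K) else 0) U =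
        ε • (bdry (fun _ _ => (-1 : K))
          (fun X => if M.Indep (↑X : Set (Fin n)) then (1 : K) else 0) U' *
            eset (fun _ _ => (-1 : K)) (U \ U')) := by
  obtain ⟨C, ⟨hCU, hC⟩, -⟩ := hU.2
  have hCU' : C ⊆ U' := by
    obtain ⟨C', ⟨hC'U', hC'⟩, -⟩ := hU'.2
    rwa [hU.2.unique ⟨hC'U'.trans hsub, hC'⟩ ⟨hCU, hC⟩] at hC'U'
  refine ⟨(-1) ^ crossInversions U' (U \ U'), neg_one_pow_eq_or K _, ?_⟩
  rw [bdry_eq_sum, bdry_eq_sum, Finset.sum_mul, Finset.smul_sum, ← Finset.sum_subset hsub]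
  · refine Finset.sum_congr rfl fun x hx => ?_
    simp only [hU.indep_erase_iff hCU hC, hU'.indep_erase_iff hCU' hC]
    by_cases hxC : x ∈ C
    · simp only [hxC, if_true, mul_one, smul_mul_assoc]
      exact (smul_eset_erase_mul_eset_sdiff hsub hx).symm
    · simp [hxC]
  · intro x _ hxU'
    have hxC : x ∉ C := fun h => hxU' (hCU' h)
    simp only [hU.indep_erase_iff hCU hC]
    simp [hxC]
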